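/- For every fair-division-with-social-impact instance (N, M, (v_i), (s_i)) with N nonempty, there exists an allocation that is simultaneously SIM and SA-EFL. -/

import Mathlib

open Finset

variable {N M : Type*}

/-- The bundle of agent `i` under allocation `A` (items mapped to `i`). -/
def bundle [Fintype M] [DecidableEq N] (A : M → N) (i : N) : Finset M :=
  Finset.univ.filter fun g => A g = i

/-- The (additive) value of a bundle `S` under the item-values `f`. -/
def val (f : M → ℕ) (S : Finset M) : ℕ := ∑ g ∈ S, f g

/-- An allocation is social impact maximizing (SIM). -/
def SIM [Fintype N] [Fintype M] [DecidableEq N] (s : N → M → ℕ) (A : M → N) : Prop :=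
  ∀ A' : M → N, ∑ i : N, val (s i) (bundle A i) ≥ ∑ i : N, val (s i) (bundle A' i)

/-- SA-EFL: for every pair of agents `i, j`, either `s_i(A_j) < s_j(A_j)`, or
`A_j` contains at most one item positively valued by `i`, or there is `g ∈ A_j`
with `v_i(A_i) ≥ v_i(A_j \ {g})` and `v_i(A_i) ≥ v_i(g)`. -/
def SAEFL [Fintype M] [DecidableEq N] [DecidableEq M]
    (v s : N → M → ℕ) (A : M → N) : Prop :=
  ∀ i j : N,
    val (s i) (bundle A j) < val (s j) (bundle A j) ∨
    ((bundle A j).filter fun g => 0 < v i g).card ≤ 1 ∨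
    ∃ g ∈ bundle A j,
      val (v i) (bundle A i) ≥ val (v i) ((bundle A j).erase g) ∧
      val (v i) (bundle A i) ≥ v i g

/-!
Run an envy-cycle algorithm on partial allocations, keeping two invariants: every allocated item
sits with an agent of maximal impact on it, and SA-EFL holds between the partial bundles. Let `g`
be unallocated and `T` the agents of maximal impact on `g`. If some `i ∈ T` values `g` above its
bundle, `i` returns its bundle to the pool and takes `{g}` alone. Otherwise, if some `j ∈ T` is
SA-envied by nobody in `T`, `j` receives `g`: an agent not in `T`, or not tied in impact with `j`
on `A_j`, has strictly less impact on `A_j ∪ {g}`, and for a tied agent `g` itself is the item to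
remove. If every agent of `T` is SA-envied from within `T`, there is an SA-envy cycle; SA-envy
requires equal impact, hence maximal impact item by item, so rotating the bundles along the cycle
keeps both invariants. Swaps and rotations raise the welfare `∑ v_i(A_i)`, assignments do not
lower it and allocate one more item, so a partial allocation maximizing this potential
lexicographically is complete, and itemwise maximal impact makes it SIM.
-/

open Function

theorem Function.periodicPts_nonempty {α : Type*} [Finite α] [Nonempty α] (f : α → α) :
    (periodicPts f).Nonempty := by
  obtain ⟨m, n, hmn, heq⟩ :=
    Finite.exists_ne_map_eq_of_infinite fun n => f^[n] (Classical.arbitrary α)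
  wlog hlt : m < n generalizing m n
  · exact this n m hmn.symm heq.symm (by omega)
  refine ⟨f^[m] (Classical.arbitrary α), mk_mem_periodicPts (n := n - m) (by omega) ?_⟩
  change f^[n - m] (f^[m] _) = _
  rw [← iterate_add_apply, Nat.sub_add_cancel hlt.le]
  exact heq.symm

theorem exists_perm_forall_eq_or_rel {α : Type*} [Finite α] {R : α → α → Prop} {T : Set α}
    (hT : T.Nonempty) (h : ∀ j ∈ T, ∃ i ∈ T, R i j) :
    ∃ σ : Equiv.Perm α, (∃ x, R (σ x) x) ∧ ∀ x, σ x = x ∨ R (σ x) x := by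
  classical
  obtain ⟨j₀, hj₀⟩ := hT
  have : Nonempty α := ⟨j₀⟩
  choose! pred hpredT hpred using h
  let f : α → α := fun j => if j ∈ T then pred j else j₀
  have hfT : ∀ j, f j ∈ T := fun j => by
    by_cases hj : j ∈ T <;> simp [f, hj, hpredT, hj₀]
  have hfR : ∀ x ∈ periodicPts f, R (f x) x := fun x hx => by
    obtain ⟨y, rfl⟩ := periodicPts_subset_range hx
    simpa [f, hfT y] using hpred _ (hfT y)
  -- on its periodic points `f` is a bijection, and these lie in `T` since they lie in `range f`
  let σ : Equiv.Perm α := Equiv.Perm.ofSubtype ((bijOn_periodicPts f).equiv f)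
  have hσ : ∀ x ∈ periodicPts f, σ x = f x := fun x hx => by
    simp [σ, Equiv.Perm.ofSubtype_apply_of_mem _ hx, Set.BijOn.equiv]
  obtain ⟨x₀, hx₀⟩ := periodicPts_nonempty f
  refine ⟨σ, ⟨x₀, hσ x₀ hx₀ ▸ hfR x₀ hx₀⟩, fun x => ?_⟩
  by_cases hx : x ∈ periodicPts f
  · exact .inr (hσ x hx ▸ hfR x hx)
  · exact .inl (Equiv.Perm.ofSubtype_apply_of_not_mem _ hx)

section Bundles

variable [Fintype M] [DecidableEq N]

@[simp]
lemma mem_bundle {A : M → N} {i : N} {g : M} : g ∈ bundle A i ↔ A g = i := by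
  simp [bundle]

lemma sum_val_bundle [Fintype N] (f : N → M → ℕ) (A : M → N) :
    ∑ i, val (f i) (bundle A i) = ∑ g, f (A g) g := by
  rw [← Finset.sum_fiberwise univ A fun g => f (A g) g]
  refine Finset.sum_congr rfl fun i _ => Finset.sum_congr rfl fun g hg => ?_
  rw [mem_bundle.mp hg]

lemma sim_of_forall_le [Fintype N] {s : N → M → ℕ} {A : M → N}
    (h : ∀ g i, s i g ≤ s (A g) g) : SIM s A := fun A' => by
  rw [ge_iff_le, sum_val_bundle, sum_val_bundle]
  exact sum_le_sum fun g _ => h g (A' g)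

end Bundles

lemma val_le_val_of_subset (f : M → ℕ) {S T : Finset M} (h : S ⊆ T) : val f S ≤ val f T :=
  sum_le_sum_of_subset h

lemma le_val_of_mem (f : M → ℕ) {g : M} {S : Finset M} (h : g ∈ S) : f g ≤ val f S :=
  single_le_sum (fun _ _ => Nat.zero_le _) h

lemma val_insert [DecidableEq M] (f : M → ℕ) {g : M} {S : Finset M} (h : g ∉ S) :
    val f (insert g S) = f g + val f S :=
  sum_insert h

section EFLCond

variable [DecidableEq M]

/-- The SA-EFL condition of `i` towards `j` for `vi = v_i`, `si = s_i`, `sj = s_j`,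
`w = v_i(A_i)` and `B = A_j`. -/
def EFLCond (vi si sj : M → ℕ) (w : ℕ) (B : Finset M) : Prop :=
  val si B < val sj B ∨ (B.filter fun g => 0 < vi g).card ≤ 1 ∨
    ∃ g ∈ B, w ≥ val vi (B.erase g) ∧ w ≥ vi g

variable {vi si sj : M → ℕ} {w : ℕ} {B : Finset M}

lemma EFLCond.mono {sj' : M → ℕ} {w' : ℕ} (h : EFLCond vi si sj w B) (hw : w ≤ w')
    (hs : val sj B ≤ val sj' B) : EFLCond vi si sj' w' B := by
  rcases h with h | h | ⟨g, hg, h₁, h₂⟩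
  · exact .inl (h.trans_le hs)
  · exact .inr (.inl h)
  · exact .inr (.inr ⟨g, hg, h₁.trans hw, h₂.trans hw⟩)

lemma EFLCond.of_val_le (h : val vi B ≤ w) : EFLCond vi si sj w B := by
  rcases B.eq_empty_or_nonempty with rfl | ⟨g, hg⟩
  · exact .inr (.inl (by simp))
  · exact .inr (.inr ⟨g, hg, (val_le_val_of_subset _ (erase_subset _ _)).trans h,
      (le_val_of_mem _ hg).trans h⟩)

lemma EFLCond.singleton (g : M) : EFLCond vi si sj w {g} :=
  .inr (.inl ((card_filter_le _ _).trans (card_singleton g).le))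

lemma eflCond_insert {g : M} (hg : g ∉ B) (hs : si g ≤ sj g) (hsB : val si B ≤ val sj B)
    (h : si g = sj g → val sj B ≤ val si B → vi g ≤ w ∧ val vi B ≤ w) :
    EFLCond vi si sj w (insert g B) := by
  by_cases hlt : val si (insert g B) < val sj (insert g B)
  · exact .inl hlt
  rw [val_insert _ hg, val_insert _ hg] at hlt
  obtain ⟨hg_le, hB_le⟩ := h (by omega) (by omega)
  exact .inr (.inr ⟨g, mem_insert_self g B, by rwa [erase_insert hg], hg_le⟩)

end EFLCond

section PartialAllocation

variable [Fintype M] [DecidableEq N] {v s : N → M → ℕ} {A : M → Option N}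

/-- A partial allocation maps the unallocated items to `none`. -/
def ItemwiseSIM (s : N → M → ℕ) (A : M → Option N) : Prop :=
  ∀ g i j, A g = some j → s i g ≤ s j g

lemma ItemwiseSIM.val_le (hA : ItemwiseSIM s A) (i j : N) :
    val (s i) (bundle A (some j)) ≤ val (s j) (bundle A (some j)) :=
  sum_le_sum fun g hg => hA g i j (mem_bundle.mp hg)

lemma ItemwiseSIM.eq_of_val_le (hA : ItemwiseSIM s A) {i j : N}
    (h : val (s j) (bundle A (some j)) ≤ val (s i) (bundle A (some j))) :
    ∀ g ∈ bundle A (some j), s i g = s j g :=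
  (sum_eq_sum_iff_of_le fun g hg => hA g i j (mem_bundle.mp hg)).mp
    ((hA.val_le i j).antisymm h)

def SAEnvies (v s : N → M → ℕ) (A : M → Option N) (i j : N) : Prop :=
  val (s j) (bundle A (some j)) ≤ val (s i) (bundle A (some j)) ∧
    val (v i) (bundle A (some i)) < val (v i) (bundle A (some j))

lemma bundle_map_perm (A : M → Option N) (σ : Equiv.Perm N) (x : N) :
    bundle (fun g => (A g).map σ) (some (σ x)) = bundle A (some x) := by
  ext g
  simp [Option.map_eq_some_iff]

lemma val_bundle_le_of_eq_or_saEnvies {σ : Equiv.Perm N} {x : N}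
    (h : σ x = x ∨ SAEnvies v s A (σ x) x) :
    val (v (σ x)) (bundle A (some (σ x))) ≤ val (v (σ x)) (bundle A (some x)) := by
  rcases h with h | h
  · rw [h]
  · exact h.2.le

def welfare [Fintype N] (v : N → M → ℕ) (A : M → Option N) : ℕ :=
  ∑ i, val (v i) (bundle A (some i))

def potential [Fintype N] (v : N → M → ℕ) (A : M → Option N) : ℕ ×ₗ ℕ :=
  toLex (welfare v A, (univ.filter fun g => A g ≠ none).card)

lemma potential_lt_of_welfare_lt [Fintype N] {A' : M → Option N}
    (h : welfare v A < welfare v A') : potential v A < potential v A' :=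
  Prod.Lex.toLex_lt_toLex.mpr (.inl h)

lemma potential_lt_update [Fintype N] [DecidableEq M] {g : M} (hg : A g = none) (j : N)
    (h : welfare v A ≤ welfare v (update A g (some j))) :
    potential v A < potential v (update A g (some j)) := by
  refine Prod.Lex.toLex_lt_toLex'.mpr ⟨h, fun _ => card_lt_card ?_⟩
  refine ssubset_iff.mpr ⟨g, by simp [hg], fun g' hg' => ?_⟩
  by_cases h' : g' = g <;> simp_all

variable [DecidableEq M]

structure IsSIMEFL (v s : N → M → ℕ) (A : M → Option N) : Prop where
  itemwiseSIM : ItemwiseSIM s A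
  eflCond : ∀ i j,
    EFLCond (v i) (s i) (s j) (val (v i) (bundle A (some i))) (bundle A (some j))

lemma isSIMEFL_none : IsSIMEFL v s fun _ => none :=
  ⟨fun _ _ _ h => (nomatch h), fun _ _ => .inr (.inl (by simp [bundle]))⟩

end PartialAllocation

section Steps

variable [Fintype N] [Fintype M] [DecidableEq N] [DecidableEq M] {v s : N → M → ℕ}
  {A : M → Option N}

lemma IsSIMEFL.exists_rotate (hA : IsSIMEFL v s A) {σ : Equiv.Perm N}
    (hσ : ∀ x, σ x = x ∨ SAEnvies v s A (σ x) x) (hσ₀ : ∃ x, SAEnvies v s A (σ x) x) :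
    ∃ A', IsSIMEFL v s A' ∧ potential v A < potential v A' := by
  have hs : ∀ x, ∀ g ∈ bundle A (some x), s (σ x) g = s x g := fun x g hg => by
    rcases hσ x with h | h
    · rw [h]
    · exact hA.itemwiseSIM.eq_of_val_le h.1 g hg
  refine ⟨fun g => (A g).map σ, ⟨fun g i j hj => ?_, fun i j => ?_⟩, ?_⟩
  · obtain ⟨x, hx, rfl⟩ := Option.map_eq_some_iff.mp hj
    rw [hs x g (mem_bundle.mpr hx)]
    exact hA.itemwiseSIM g i x hx
  · obtain ⟨x, rfl⟩ := σ.surjective j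
    obtain ⟨y, rfl⟩ := σ.surjective i
    rw [bundle_map_perm, bundle_map_perm]
    exact (hA.eflCond _ x).mono (val_bundle_le_of_eq_or_saEnvies (hσ y))
      (sum_congr rfl (hs x)).ge
  · refine potential_lt_of_welfare_lt ?_
    unfold welfare
    rw [← Equiv.sum_comp σ, ← Equiv.sum_comp σ fun i => val (v i) (bundle _ (some i))]
    simp only [bundle_map_perm]
    obtain ⟨x₀, h₀⟩ := hσ₀
    exact sum_lt_sum (fun x _ => val_bundle_le_of_eq_or_saEnvies (hσ x))
      ⟨x₀, mem_univ _, h₀.2⟩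

lemma IsSIMEFL.exists_swap (hA : IsSIMEFL v s A) {g : M} (hg : A g = none) {i : N}
    (hi : ∀ k, s k g ≤ s i g) (hlt : val (v i) (bundle A (some i)) < v i g) :
    ∃ A', IsSIMEFL v s A' ∧ potential v A < potential v A' := by
  let A' : M → Option N := fun g' =>
    if g' = g then some i else if A g' = some i then none else A g'
  have hi' : bundle A' (some i) = {g} := by
    ext g'
    by_cases h : g' = g <;> simp [A', h]
  have hk' : ∀ k ≠ i, bundle A' (some k) = bundle A (some k) := fun k hk => by
    ext g'
    by_cases h : g' = g <;> by_cases h' : A g' = some i <;> simp_all [A', eq_comm]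
  have hvi : val (v i) (bundle A' (some i)) = v i g := by rw [hi']; exact sum_singleton _ _
  have hown : ∀ k, val (v k) (bundle A (some k)) ≤ val (v k) (bundle A' (some k)) := fun k => by
    by_cases hk : k = i
    · subst hk; rw [hvi]; exact hlt.le
    · rw [hk' k hk]
  refine ⟨A', ⟨fun g' a b hb => ?_, fun a b => ?_⟩, potential_lt_of_welfare_lt ?_⟩
  · simp only [A'] at hb
    split_ifs at hb with h
    · cases hb; subst h; exact hi a
    · exact hA.itemwiseSIM g' a b hb
  · by_cases hb : b = i
    · subst hb; rw [hi']; exact .singleton g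
    · rw [hk' b hb]; exact (hA.eflCond a b).mono (hown a) le_rfl
  · exact sum_lt_sum (fun k _ => hown k) ⟨i, mem_univ i, by rwa [hvi]⟩

lemma IsSIMEFL.exists_assign (hA : IsSIMEFL v s A) {g : M} (hg : A g = none) {j : N}
    (hj : ∀ k, s k g ≤ s j g)
    (hfree : ∀ i, (∀ k, s k g ≤ s i g) →
      v i g ≤ val (v i) (bundle A (some i)) ∧ ¬ SAEnvies v s A i j) :
    ∃ A', IsSIMEFL v s A' ∧ potential v A < potential v A' := by
  let A' := update A g (some j)
  have hgj : g ∉ bundle A (some j) := by simp [hg]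
  have hj' : bundle A' (some j) = insert g (bundle A (some j)) := by
    ext g'
    by_cases h : g' = g <;> simp [A', h]
  have hk' : ∀ k ≠ j, bundle A' (some k) = bundle A (some k) := fun k hk => by
    ext g'
    by_cases h : g' = g <;> simp_all [A', eq_comm]
  have hown : ∀ k, val (v k) (bundle A (some k)) ≤ val (v k) (bundle A' (some k)) := fun k => by
    by_cases hk : k = j
    · subst hk; rw [hj', val_insert _ hgj]; omega
    · rw [hk' k hk]
  refine ⟨A', ⟨fun g' a b hb => ?_, fun a b => ?_⟩,
    potential_lt_update hg j (sum_le_sum fun k _ => hown k)⟩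
  · by_cases h : g' = g
    · subst h; simp only [A', update_self, Option.some_inj] at hb; subst hb; exact hj a
    · simp only [A', update_of_ne h] at hb; exact hA.itemwiseSIM g' a b hb
  · by_cases hb : b = j
    · subst hb
      by_cases hab : a = b
      · subst hab; exact .of_val_le le_rfl
      rw [hj', hk' a hab]
      refine eflCond_insert hgj (hj a) (hA.itemwiseSIM.val_le a b) fun htie hsB => ?_
      obtain ⟨hv, hne⟩ := hfree a (htie ▸ hj)
      exact ⟨hv, not_lt.mp fun h => hne ⟨hsB, h⟩⟩
    · rw [hk' b hb]; exact (hA.eflCond a b).mono (hown a) le_rfl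

end Steps

lemma IsSIMEFL.exists_potential_lt [Fintype N] [Fintype M] [DecidableEq N] [DecidableEq M]
    [Nonempty N] {v s : N → M → ℕ} {A : M → Option N} (hA : IsSIMEFL v s A) {g : M}
    (hg : A g = none) : ∃ A', IsSIMEFL v s A' ∧ potential v A < potential v A' := by
  let T : Set N := {i | ∀ k, s k g ≤ s i g}
  by_cases hswap : ∃ i ∈ T, val (v i) (bundle A (some i)) < v i g
  · obtain ⟨i, hi, hlt⟩ := hswap
    exact hA.exists_swap hg hi hlt
  push Not at hswap
  by_cases hcycle : ∀ j ∈ T, ∃ i ∈ T, SAEnvies v s A i j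
  · obtain ⟨σ, hσ₀, hσ⟩ :=
      exists_perm_forall_eq_or_rel (Finite.exists_max fun i => s i g) hcycle
    exact hA.exists_rotate hσ hσ₀
  push Not at hcycle
  obtain ⟨j, hj, hfree⟩ := hcycle
  exact hA.exists_assign hg hj fun i hi => ⟨hswap i hi, hfree i hi⟩

lemma IsSIMEFL.sim_saefl [Fintype N] [Fintype M] [DecidableEq N] [DecidableEq M]
    {v s : N → M → ℕ} {F : M → N} (hF : IsSIMEFL v s fun g => some (F g)) :
    SIM s F ∧ SAEFL v s F := by
  have hbundle : ∀ i, bundle (fun g => some (F g)) (some i) = bundle F i := fun i => by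
    ext g
    simp
  refine ⟨sim_of_forall_le fun g i => hF.itemwiseSIM g i (F g) rfl, fun i j => ?_⟩
  have h := hF.eflCond i j
  rwa [hbundle, hbundle] at h

/-- A SIM and SA-EFL allocation always exists. -/
theorem exists_sim_saefl
    [Fintype N] [Fintype M] [DecidableEq N] [DecidableEq M] [Nonempty N]
    (v s : N → M → ℕ) :
    ∃ A : M → N, SIM s A ∧ SAEFL v s A := by
  classical
  obtain ⟨A, hA, hmax⟩ := (univ.filter (IsSIMEFL v s)).exists_max_image (potential v)
    ⟨fun _ => none, mem_filter.mpr ⟨mem_univ _, isSIMEFL_none⟩⟩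
  simp only [mem_filter, mem_univ, true_and] at hA hmax
  have hall : ∀ g, ∃ i, A g = some i := fun g => Option.ne_none_iff_exists'.mp fun hg => by
    obtain ⟨A', hA', hlt⟩ := hA.exists_potential_lt hg
    exact (hmax A' hA').not_gt hlt
  choose F hF using hall
  rw [show A = fun g => some (F g) from funext hF] at hA
  exact ⟨F, hA.sim_saefl⟩
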